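/- arXiv:2504.14811 — 6 statements merged into one kernel-verified Lean document; each statement's English description precedes it below -/
import Mathlib

section
/- Let R be a commutative ring, M an R-module, and B : M →ₗ[R] M →ₗ[R] R a perfect bilinear form that is skew-symmetric, i.e., B y x = -B x y for all x, y ∈ M. Suppose F and G are complementary isotropic submodules of M. Then there exists a linear equivalence u : M ≃ₗ[R] F × Module.Dual R F such that (i) u maps F onto F × {0} and G onto {0} × Module.Dual R F, and (ii) for all m, m' ∈ M one has B m m' = (u m').2 ((u m).1) - (u m).2 ((u m').1). In other words, (M, B) with the pair of Lagrangians (F, G) is isomorphic to the hyperbolic (-1)-symmetric form on F with its standard pair of Lagrangians (F, F*). -/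
/-!
Let `π : M → F` be the projection along `G` and send `m` to `(π m, B (·) m |_F)`. Expanding
`B m m'` along `M = F ⊕ G`, the terms `B F F` and `B G G` vanish, and skew-symmetry turns what
is left into the hyperbolic form of the images. The identity makes the map injective as soon as
`B` is non-degenerate, and surjectivity of `B` realises every functional on `F`. Isotropy of `F`
sends `F` into `F × 0`, and `π` kills `G`.
-/

namespace LinearMap

open Function Module Submodule

variable {R M : Type*} [CommRing R] [AddCommGroup M] [Module R M]
  (B : M →ₗ[R] M →ₗ[R] R) {F G : Submodule R M} (hFG : IsCompl F G)

noncomputable def toHyperbolic : M →ₗ[R] F × Dual R F :=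
  (F.projectionOnto G hFG).prod (F.subtype.dualMap ∘ₗ B.flip)

@[simp]
lemma toHyperbolic_apply_fst (m : M) : (B.toHyperbolic hFG m).1 = F.projectionOnto G hFG m :=
  rfl

@[simp]
lemma toHyperbolic_apply_snd (m : M) (f : F) : (B.toHyperbolic hFG m).2 f = B f m :=
  rfl

lemma toHyperbolic_apply_of_mem_left (hF : ∀ x ∈ F, ∀ y ∈ F, B x y = 0) (f : F) :
    B.toHyperbolic hFG f = (f, 0) :=
  Prod.ext (F.projectionOnto_apply_left hFG f) (LinearMap.ext fun f' => hF f' f'.2 f f.2)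

lemma apply_eq_toHyperbolic (hskew : ∀ x y : M, B y x = -B x y)
    (hF : ∀ x ∈ F, ∀ y ∈ F, B x y = 0) (hG : ∀ x ∈ G, ∀ y ∈ G, B x y = 0) (m m' : M) :
    B m m' = (B.toHyperbolic hFG m').2 (B.toHyperbolic hFG m).1
      - (B.toHyperbolic hFG m).2 (B.toHyperbolic hFG m').1 := by
  rw [toHyperbolic_apply_snd, toHyperbolic_apply_snd, toHyperbolic_apply_fst,
    toHyperbolic_apply_fst]
  obtain ⟨a, g, ha, hg, rfl⟩ := codisjoint_iff_exists_add_eq.mp hFG.codisjoint m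
  obtain ⟨a', g', ha', hg', rfl⟩ := codisjoint_iff_exists_add_eq.mp hFG.codisjoint m'
  simp only [map_add, add_apply, projectionOnto_apply_of_mem_left hFG ha,
    projectionOnto_apply_of_mem_left hFG ha', projectionOnto_apply_of_mem_right hFG hg,
    projectionOnto_apply_of_mem_right hFG hg', add_zero]
  rw [hF a ha a' ha', hF a' ha' a ha, hG g hg g' hg', hskew a' g]
  ring

lemma toHyperbolic_injective (hB : Injective B) (hskew : ∀ x y : M, B y x = -B x y)
    (hF : ∀ x ∈ F, ∀ y ∈ F, B x y = 0) (hG : ∀ x ∈ G, ∀ y ∈ G, B x y = 0) :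
    Injective (B.toHyperbolic hFG) := by
  refine (injective_iff_map_eq_zero _).2 fun n hn => hB ?_
  ext m
  simp [B.apply_eq_toHyperbolic hFG hskew hF hG n m, hn]

lemma exists_toHyperbolic_snd_eq (hB : Surjective B) (hskew : ∀ x y : M, B y x = -B x y)
    (φ : Dual R F) : ∃ m, (B.toHyperbolic hFG m).2 = φ := by
  obtain ⟨m, hm⟩ := hB (-(φ ∘ₗ F.projectionOnto G hFG))
  refine ⟨m, LinearMap.ext fun f => ?_⟩
  rw [toHyperbolic_apply_snd, hskew, hm]
  simp

lemma toHyperbolic_surjective (hB : Surjective B) (hskew : ∀ x y : M, B y x = -B x y)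
    (hF : ∀ x ∈ F, ∀ y ∈ F, B x y = 0) : Surjective (B.toHyperbolic hFG) := by
  rintro ⟨f, φ⟩
  obtain ⟨m, hm⟩ := B.exists_toHyperbolic_snd_eq hFG hB hskew φ
  refine ⟨m + f - F.projectionOnto G hFG m, ?_⟩
  rw [map_sub, map_add, B.toHyperbolic_apply_of_mem_left hFG hF,
    B.toHyperbolic_apply_of_mem_left hFG hF]
  ext1 <;> simp [hm]

lemma map_toHyperbolic_left (hF : ∀ x ∈ F, ∀ y ∈ F, B x y = 0) :
    F.map (B.toHyperbolic hFG) = Submodule.fst R F (Dual R F) := by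
  apply le_antisymm
  · rintro _ ⟨x, hx, rfl⟩
    exact (mem_bot R).2 (LinearMap.ext fun f => hF f f.2 x hx)
  · rintro ⟨f, φ⟩ hφ
    obtain rfl : φ = 0 := (mem_bot R).1 hφ
    exact ⟨f, f.2, B.toHyperbolic_apply_of_mem_left hFG hF f⟩

lemma map_toHyperbolic_right (hsurj : Surjective (B.toHyperbolic hFG)) :
    G.map (B.toHyperbolic hFG) = Submodule.snd R F (Dual R F) := by
  have comap_snd : (Submodule.snd R F (Dual R F)).comap (B.toHyperbolic hFG) = G := by
    ext m
    simp [Submodule.snd]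
  rw [← map_comap_eq_of_surjective hsurj (Submodule.snd R F (Dual R F)), comap_snd]

end LinearMap

/-- A perfect skew-symmetric form with complementary isotropic
submodules `F`, `G` is isomorphic to the hyperbolic `(-1)`-symmetric form on `F`
with its standard pair of Lagrangians. -/
theorem stmt1 {R M : Type*} [CommRing R] [AddCommGroup M] [Module R M]
    (B : M →ₗ[R] M →ₗ[R] R)
    (hB : Function.Bijective fun x : M => (B x : Module.Dual R M))
    (hskew : ∀ x y : M, B y x = - B x y)
    (F G : Submodule R M)
    (hF : ∀ x ∈ F, ∀ y ∈ F, B x y = 0)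
    (hG : ∀ x ∈ G, ∀ y ∈ G, B x y = 0)
    (hFG : IsCompl F G) :
    ∃ u : M ≃ₗ[R] F × Module.Dual R F,
      Submodule.map (u : M →ₗ[R] F × Module.Dual R F) F
        = Submodule.fst R F (Module.Dual R F) ∧
      Submodule.map (u : M →ₗ[R] F × Module.Dual R F) G
        = Submodule.snd R F (Module.Dual R F) ∧
      ∀ m m' : M, B m m' = (u m').2 ((u m).1) - (u m).2 ((u m').1) := by
  have hsurj := B.toHyperbolic_surjective hFG hB.2 hskew hF
  exact ⟨.ofBijective (B.toHyperbolic hFG) ⟨B.toHyperbolic_injective hFG hB.1 hskew hF hG, hsurj⟩,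
    B.map_toHyperbolic_left hFG hF, B.map_toHyperbolic_right hFG hsurj,
    B.apply_eq_toHyperbolic hFG hskew hF hG⟩
end

section
/- Let R be a commutative ring and let L, M be finitely generated free R-modules. Let B : M →ₗ[R] M →ₗ[R] R be an alternating (B x x = 0 for all x) perfect bilinear form, and let i : L →ₗ[R] M be an injective linear map whose image is isotropic (B (i l) (i l') = 0 for all l, l' ∈ L). Let p : M →ₗ[R] Module.Dual R L be the map m ↦ (l ↦ B (i l) m), and assume the sequence 0 → L → M → Module.Dual R L → 0 (with maps i and p) is split exact: p is surjective, ker p = range i, and p admits a linear section. Then there exists a linear equivalence u : M ≃ₗ[R] L × Module.Dual R L such that u ∘ i is the canonical inclusion l ↦ (l, 0) and B m m' = (u m').2 ((u m).1) - (u m).2 ((u m').1) for all m, m' ∈ M. That is, a form admitting a Lagrangian L is isomorphic to the hyperbolic form on L. -/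
/-!
Choose any section `s` of `p`. Its image need not be isotropic: the defect is the alternating
form `C φ ψ = B (s φ) (s ψ)` on `L*`. Over a free module every alternating form is `D - Dᵀ` for
some bilinear `D` (keep the strictly upper triangular part of its Gram matrix), and since `L` is
reflexive `D` is represented by a map `h : L* → L` with `ψ (h φ) = D φ ψ`. The corrected section
`s - i ∘ h` has isotropic image, and then `(l, φ) ↦ i l + s' φ` is an isometry from the
hyperbolic form on `L × L*` onto `(M, B)`.
-/

open Module

namespace LinearMap

variable {R V : Type*} [CommRing R] [AddCommGroup V] [Module R V]

theorem IsAlt.exists_sub_flip_eq [Free R V] {C : V →ₗ[R] V →ₗ[R] R} (hC : C.IsAlt) :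
    ∃ D : V →ₗ[R] V →ₗ[R] R, D - D.flip = C := by
  let b := Free.chooseBasis R V
  let _ : LinearOrder (Free.ChooseBasisIndex R V) := IsWellOrder.linearOrder WellOrderingRel
  let D : V →ₗ[R] V →ₗ[R] R :=
    b.constr R fun j => b.constr R fun k => if j < k then C (b j) (b k) else 0
  have hD : ∀ j k, D (b j) (b k) = if j < k then C (b j) (b k) else 0 := fun j k => by
    simp only [D, Basis.constr_basis]
  refine ⟨D, ext_basis b b fun j k => ?_⟩
  simp only [sub_apply, flip_apply, hD]
  rcases lt_trichotomy j k with h | rfl | h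
  · simp [h, h.not_gt]
  · simp [hC.self_eq_zero]
  · simp [h, h.not_gt, ← hC.neg (b j) (b k)]

variable {L M : Type*} [AddCommGroup L] [Module R L] [AddCommGroup M] [Module R M]
  {B : M →ₗ[R] M →ₗ[R] R} {i : L →ₗ[R] M}

theorem IsAlt.exists_isotropic_section [IsReflexive R L] [Free R (Dual R L)]
    (hB : B.IsAlt) (hiso : ∀ l l' : L, B (i l) (i l') = 0) (s : Dual R L →ₗ[R] M)
    (hs : ∀ φ l, B (i l) (s φ) = φ l) :
    ∃ s' : Dual R L →ₗ[R] M, (∀ φ l, B (i l) (s' φ) = φ l) ∧ ∀ φ ψ, B (s' φ) (s' ψ) = 0 := by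
  obtain ⟨D, hD⟩ := (show (B.compl₁₂ s s).IsAlt from fun φ => hB (s φ)).exists_sub_flip_eq
  let h : Dual R L →ₗ[R] L := (evalEquiv R L).symm.toLinearMap ∘ₗ D
  have hh : ∀ φ ψ, ψ (h φ) = D φ ψ := fun φ ψ => by simp [h]
  have hDC : ∀ φ ψ, D φ ψ - D ψ φ = B (s φ) (s ψ) := fun φ ψ => by
    simpa using congr($hD φ ψ)
  refine ⟨s - i ∘ₗ h, fun φ l => ?_, fun φ ψ => ?_⟩
  · simp [hiso, hs]
  · have hsi : B (s φ) (i (h ψ)) = -φ (h ψ) := by rw [← hB.neg, hs]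
    simp only [sub_apply, coe_comp, Function.comp_apply, map_sub, hsi, hs, hiso, hh]
    linear_combination -hDC φ ψ

variable {s' : Dual R L →ₗ[R] M} (hs' : ∀ φ l, B (i l) (s' φ) = φ l)
include hs'

theorem IsAlt.coprod_apply_coprod (hB : B.IsAlt) (hiso : ∀ l l' : L, B (i l) (i l') = 0)
    (hiso' : ∀ φ ψ, B (s' φ) (s' ψ) = 0) (x y : L × Dual R L) :
    B (i.coprod s' x) (i.coprod s' y) = y.2 x.1 - x.2 y.1 := by
  have hsi : ∀ φ l, B (s' φ) (i l) = -φ l := fun φ l => by rw [← hB.neg, hs']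
  simp [hiso, hiso', hs', hsi, sub_eq_add_neg]

theorem bijective_coprod_of_isotropic (hi : Function.Injective i)
    (hiso : ∀ l l' : L, B (i l) (i l') = 0)
    (hker : ∀ m, (∀ l, B (i l) m = 0) → m ∈ range i) :
    Function.Bijective (i.coprod s') := by
  refine ⟨(injective_iff_map_eq_zero _).mpr fun ⟨l, φ⟩ h0 => ?_, fun m => ?_⟩
  · have hφ : φ = 0 := LinearMap.ext fun l' => by
      simpa [hiso, hs'] using congr(B (i l') $h0)
    subst hφ
    simpa using hi (by simpa using h0)
  · let φ : Dual R L := B.flip m ∘ₗ i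
    obtain ⟨l, hl⟩ := hker (m - s' φ) fun l => by simp [hs', φ]
    exact ⟨(l, φ), by simp [hl]⟩

end LinearMap

theorem stmt2_general {R L M : Type*} [CommRing R]
    [AddCommGroup L] [Module R L] [Module.Finite R L] [Module.Free R L]
    [AddCommGroup M] [Module R M]
    (B : M →ₗ[R] M →ₗ[R] R)
    (halt : ∀ x : M, B x x = 0)
    (i : L →ₗ[R] M) (hi : Function.Injective i)
    (hiso : ∀ l l' : L, B (i l) (i l') = 0)
    (p : M →ₗ[R] Module.Dual R L)
    (hp : ∀ (m : M) (l : L), p m l = B (i l) m)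
    (hker : LinearMap.ker p = LinearMap.range i)
    (hsplit : ∃ s : Module.Dual R L →ₗ[R] M, p ∘ₗ s = LinearMap.id) :
    ∃ u : M ≃ₗ[R] L × Module.Dual R L,
      (∀ l : L, u (i l) = (l, 0)) ∧
      ∀ m m' : M, B m m' = (u m').2 ((u m).1) - (u m).2 ((u m').1) := by
  obtain ⟨s, hs⟩ := hsplit
  have hB : B.IsAlt := halt
  obtain ⟨s', hs', hiso'⟩ := hB.exists_isotropic_section hiso s fun φ l => by
    rw [← hp, ← LinearMap.comp_apply p s, hs, LinearMap.id_apply]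
  have hker' : ∀ m, (∀ l, B (i l) m = 0) → m ∈ LinearMap.range i := fun m hm =>
    hker ▸ LinearMap.mem_ker.mpr (LinearMap.ext fun l => by simp [hp, hm])
  let e := LinearEquiv.ofBijective _ (LinearMap.bijective_coprod_of_isotropic hs' hi hiso hker')
  refine ⟨e.symm, fun l => e.symm_apply_eq.mpr (by simp [e]), fun m m' => ?_⟩
  rw [← hB.coprod_apply_coprod hs' hiso hiso']
  exact congr(B $((e.apply_symm_apply m).symm) $((e.apply_symm_apply m').symm))

/-- An alternating perfect form on a finitely generated free module
admitting a Lagrangian `i : L → M` (split exact `0 → L → M → L* → 0`) is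
isomorphic to the hyperbolic form on `L`. -/
theorem stmt2 {R L M : Type*} [CommRing R]
    [AddCommGroup L] [Module R L] [Module.Finite R L] [Module.Free R L]
    [AddCommGroup M] [Module R M] [Module.Finite R M] [Module.Free R M]
    (B : M →ₗ[R] M →ₗ[R] R)
    (halt : ∀ x : M, B x x = 0)
    (hB : Function.Bijective fun x : M => (B x : Module.Dual R M))
    (i : L →ₗ[R] M) (hi : Function.Injective i)
    (hiso : ∀ l l' : L, B (i l) (i l') = 0)
    (p : M →ₗ[R] Module.Dual R L)
    (hp : ∀ (m : M) (l : L), p m l = B (i l) m)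
    (hsurj : Function.Surjective p)
    (hker : LinearMap.ker p = LinearMap.range i)
    (hsplit : ∃ s : Module.Dual R L →ₗ[R] M, p ∘ₗ s = LinearMap.id) :
    ∃ u : M ≃ₗ[R] L × Module.Dual R L,
      (∀ l : L, u (i l) = (l, 0)) ∧
      ∀ m m' : M, B m m' = (u m').2 ((u m).1) - (u m).2 ((u m').1) :=
  stmt2_general B halt i hi hiso p hp hker hsplit
end

section
/- Let R be a commutative ring, n a natural number, and A, B, C, D : Matrix (Fin n) (Fin n) R. Suppose M = Matrix.fromBlocks A B C D belongs to the symplectic group Matrix.symplecticGroup (Fin n) R and that A is invertible (IsUnit A). Then: (i) D - C * A⁻¹ * B = (A⁻¹)ᵀ; (ii) M factors as M = (Matrix.fromBlocks 1 0 (C * A⁻¹) 1) * (Matrix.fromBlocks A B 0 (A⁻¹)ᵀ); and (iii) both factors Matrix.fromBlocks 1 0 (C * A⁻¹) 1 and Matrix.fromBlocks A B 0 (A⁻¹)ᵀ again belong to Matrix.symplecticGroup (Fin n) R. -/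
open Matrix

/-- A symplectic matrix with invertible upper-left block `A`
factors as a lower elementary symplectic matrix times a block upper-triangular
symplectic matrix. -/
theorem stmt4 {R : Type*} [CommRing R] {n : ℕ}
    (A B C D : Matrix (Fin n) (Fin n) R)
    (hM : Matrix.fromBlocks A B C D ∈ Matrix.symplecticGroup (Fin n) R)
    (hA : IsUnit A) :
    D - C * A⁻¹ * B = (A⁻¹)ᵀ ∧
    Matrix.fromBlocks A B C D =
      Matrix.fromBlocks 1 0 (C * A⁻¹) 1 * Matrix.fromBlocks A B 0 (A⁻¹)ᵀ ∧
    Matrix.fromBlocks 1 0 (C * A⁻¹) 1 ∈ Matrix.symplecticGroup (Fin n) R ∧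
    Matrix.fromBlocks A B 0 (A⁻¹)ᵀ ∈ Matrix.symplecticGroup (Fin n) R := by
  have hdet : IsUnit A.det := (Matrix.isUnit_iff_isUnit_det A).mp hA
  have hAi : A * A⁻¹ = 1 := Matrix.mul_nonsing_inv A hdet
  have hiA : A⁻¹ * A = 1 := Matrix.nonsing_inv_mul A hdet
  have hiAT : (A⁻¹)ᵀ * Aᵀ = 1 := by rw [← Matrix.transpose_mul, hAi, Matrix.transpose_one]
  have hATi : Aᵀ * (A⁻¹)ᵀ = 1 := by rw [← Matrix.transpose_mul, hiA, Matrix.transpose_one]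
  have hMT := SymplecticGroup.transpose_mem hM
  rw [SymplecticGroup.mem_iff] at hM hMT
  simp only [Matrix.J, Matrix.fromBlocks_transpose, Matrix.transpose_transpose,
    Matrix.fromBlocks_multiply, Matrix.mul_zero, Matrix.mul_one,
    Matrix.zero_mul, Matrix.mul_neg, Matrix.neg_mul, add_zero, zero_add,
    Matrix.one_mul] at hM hMT
  obtain ⟨h1, h2, h3, h4⟩ := Matrix.fromBlocks_inj.mp hM
  obtain ⟨g1, g2, g3, g4⟩ := Matrix.fromBlocks_inj.mp hMT
  have hBA : B * Aᵀ = A * Bᵀ := by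
    rw [← sub_eq_add_neg, sub_eq_zero] at h1; exact h1
  have hCA : Cᵀ * A = Aᵀ * C := by
    rw [← sub_eq_add_neg, sub_eq_zero] at g1; exact g1
  have hAD : Aᵀ * D - Cᵀ * B = 1 := by
    rw [← sub_eq_add_neg, sub_eq_iff_eq_add] at g2
    rw [g2]; abel
  have key : Aᵀ * (D - C * A⁻¹ * B) = 1 := by
    calc Aᵀ * (D - C * A⁻¹ * B) = Aᵀ * D - (Aᵀ * C) * (A⁻¹ * B) := by noncomm_ring
    _ = Aᵀ * D - Cᵀ * (A * A⁻¹) * B := by rw [← hCA]; noncomm_ring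
    _ = Aᵀ * D - Cᵀ * B := by rw [hAi, Matrix.mul_one]
    _ = 1 := hAD
  have part1 : D - C * A⁻¹ * B = (A⁻¹)ᵀ := by
    calc D - C * A⁻¹ * B = (A⁻¹)ᵀ * Aᵀ * (D - C * A⁻¹ * B) := by rw [hiAT, Matrix.one_mul]
    _ = (A⁻¹)ᵀ * (Aᵀ * (D - C * A⁻¹ * B)) := by rw [Matrix.mul_assoc]
    _ = (A⁻¹)ᵀ := by rw [key, Matrix.mul_one]
  have hDsum : C * A⁻¹ * B + (A⁻¹)ᵀ = D := by rw [← part1]; abel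
  have part2 : Matrix.fromBlocks A B C D =
      Matrix.fromBlocks 1 0 (C * A⁻¹) 1 * Matrix.fromBlocks A B 0 (A⁻¹)ᵀ := by
    rw [Matrix.fromBlocks_multiply]
    simp only [Matrix.one_mul, Matrix.zero_mul, Matrix.mul_zero, Matrix.mul_one,
      add_zero, zero_add]
    rw [Matrix.mul_assoc, hiA, Matrix.mul_one, hDsum]
  have hsym : (C * A⁻¹)ᵀ = C * A⁻¹ := by
    rw [Matrix.transpose_mul]
    calc (A⁻¹)ᵀ * Cᵀ = (A⁻¹)ᵀ * Cᵀ * (A * A⁻¹) := by rw [hAi, Matrix.mul_one]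
    _ = (A⁻¹)ᵀ * (Cᵀ * A) * A⁻¹ := by noncomm_ring
    _ = ((A⁻¹)ᵀ * Aᵀ) * C * A⁻¹ := by rw [hCA]; noncomm_ring
    _ = C * A⁻¹ := by rw [hiAT, Matrix.one_mul]
  have part3 : Matrix.fromBlocks 1 0 (C * A⁻¹) 1 ∈ Matrix.symplecticGroup (Fin n) R := by
    rw [SymplecticGroup.mem_iff]
    simp only [Matrix.J, Matrix.fromBlocks_transpose, Matrix.transpose_transpose,
      Matrix.fromBlocks_multiply, Matrix.mul_zero, Matrix.mul_one,
      Matrix.zero_mul, Matrix.mul_neg, Matrix.neg_mul, add_zero, zero_add,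
      Matrix.one_mul, Matrix.transpose_one, Matrix.transpose_zero, neg_zero,
      Matrix.zero_mul, hsym]
    abel_nf
  have part4 : Matrix.fromBlocks A B 0 (A⁻¹)ᵀ ∈ Matrix.symplecticGroup (Fin n) R := by
    rw [SymplecticGroup.mem_iff]
    simp only [Matrix.J, Matrix.fromBlocks_transpose, Matrix.transpose_transpose,
      Matrix.fromBlocks_multiply, Matrix.mul_zero, Matrix.mul_one,
      Matrix.zero_mul, Matrix.mul_neg, Matrix.neg_mul, add_zero, zero_add,
      Matrix.one_mul, Matrix.transpose_zero, neg_zero, hAi, hBA, hiAT]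
    abel_nf
  exact ⟨part1, part2, part3, part4⟩
end

section
/- Let R be a commutative ring, n a natural number, and let γ be a linear automorphism of (Fin n → R) × (Fin n → R) with block components A, B, C, D, i.e., γ (x, y) = (A x + B y, C x + D y) for linear endomorphisms A, B, C, D of Fin n → R. Let F = (Fin n → R) × {0} be the first-factor submodule and K = {0} × (Fin n → R) the second-factor submodule. Then the image submodule Submodule.map γ F is complementary to K (IsCompl (Submodule.map γ F) K) if and only if A : (Fin n → R) →ₗ[R] (Fin n → R) is bijective. -/
/-- For a linear automorphism `γ` of `(Fin n → R) × (Fin n → R)`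
with block components `A, B, C, D`, the image `γ(F)` of the first-factor submodule
`F` is complementary to the second-factor submodule `K` iff `A` is bijective. -/
theorem stmt6 {R : Type*} [CommRing R] {n : ℕ}
    (γ : ((Fin n → R) × (Fin n → R)) ≃ₗ[R] ((Fin n → R) × (Fin n → R)))
    (A B C D : (Fin n → R) →ₗ[R] (Fin n → R))
    (hγ : ∀ x y : Fin n → R, γ (x, y) = (A x + B y, C x + D y)) :
    IsCompl
        (Submodule.map γ.toLinearMap (Submodule.fst R (Fin n → R) (Fin n → R)))
        (Submodule.snd R (Fin n → R) (Fin n → R))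
      ↔ Function.Bijective A := by
  have hF : ∀ p : (Fin n → R) × (Fin n → R),
      p ∈ Submodule.fst R (Fin n → R) (Fin n → R) ↔ p.2 = 0 := by
    intro p; simp [Submodule.fst, Submodule.mem_comap]
  have hK : ∀ p : (Fin n → R) × (Fin n → R),
      p ∈ Submodule.snd R (Fin n → R) (Fin n → R) ↔ p.1 = 0 := by
    intro p; simp [Submodule.snd, Submodule.mem_comap]
  have key : ∀ x : Fin n → R, γ (x, 0) = (A x, C x) := by
    intro x; simpa using hγ x 0
  have hmap : ∀ p : (Fin n → R) × (Fin n → R),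
      p ∈ Submodule.map γ.toLinearMap (Submodule.fst R (Fin n → R) (Fin n → R)) ↔
        ∃ x : Fin n → R, (A x, C x) = p := by
    intro p
    constructor
    · rintro ⟨⟨x, y⟩, hxy, rfl⟩
      have hy : y = 0 := (hF (x, y)).mp hxy
      subst hy
      exact ⟨x, (key x).symm⟩
    · rintro ⟨x, rfl⟩
      exact ⟨(x, 0), (hF _).mpr rfl, key x⟩
  constructor
  · intro h
    constructor
    · rw [← LinearMap.ker_eq_bot]
      rw [Submodule.eq_bot_iff]
      intro x hx
      have hx0 : A x = 0 := hx
      have hmem : ((A x, C x) : (Fin n → R) × (Fin n → R)) ∈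
          Submodule.map γ.toLinearMap (Submodule.fst R (Fin n → R) (Fin n → R)) ⊓
            Submodule.snd R (Fin n → R) (Fin n → R) :=
        Submodule.mem_inf.mpr ⟨(hmap _).mpr ⟨x, rfl⟩, (hK _).mpr hx0⟩
      have h0 : ((A x, C x) : (Fin n → R) × (Fin n → R)) = 0 := by
        simpa using h.disjoint.le_bot hmem
      have : γ (x, 0) = γ 0 := by rw [key, h0, map_zero]
      have := γ.injective this
      exact congrArg Prod.fst this
    · intro v
      have : ((v, 0) : (Fin n → R) × (Fin n → R)) ∈
          Submodule.map γ.toLinearMap (Submodule.fst R (Fin n → R) (Fin n → R)) ⊔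
            Submodule.snd R (Fin n → R) (Fin n → R) := by
        rw [h.codisjoint.eq_top]; trivial
      obtain ⟨a, ha, b, hb, hab⟩ := Submodule.mem_sup.mp this
      obtain ⟨x, rfl⟩ := (hmap a).mp ha
      refine ⟨x, ?_⟩
      have := congrArg Prod.fst hab
      simpa [(hK b).mp hb] using this
  · intro hA
    constructor
    · rw [disjoint_iff, Submodule.eq_bot_iff]
      rintro p ⟨hp1, hp2⟩
      obtain ⟨x, rfl⟩ := (hmap p).mp hp1
      have hx : A x = 0 := (hK _).mp hp2
      have : x = 0 := hA.injective (by simpa using hx)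
      simp [this]
    · rw [codisjoint_iff, Submodule.eq_top_iff']
      rintro ⟨u, v⟩
      obtain ⟨x, hx⟩ := hA.surjective u
      refine Submodule.mem_sup.mpr ⟨(A x, C x), (hmap _).mpr ⟨x, rfl⟩,
        (0, v - C x), (hK _).mpr rfl, ?_⟩
      simp [hx]
end

section
/- Let Λ be a finite metric space, d ≥ 1, H = (Λ → Fin d), and 𝒜 = Matrix H H ℂ. For S : Set Λ let 𝒜_S ⊆ 𝒜 denote the subalgebra of operators supported on S, namely the matrices obtained by reindexing along the equivalence (Λ → Fin d) ≃ (S → Fin d) × (Sᶜ → Fin d) the Kronecker product of an arbitrary matrix on S → Fin d with the identity matrix on Sᶜ → Fin d. Let α be a ℂ-algebra automorphism of 𝒜 and r ≥ 0 such that for every x ∈ Λ, α maps 𝒜_{{x}} into 𝒜_{Metric.closedBall x r}. Then: (i) for every subset X ⊆ Λ, α maps 𝒜_X into 𝒜_{B_r(X)}, where B_r(X) = {y ∈ Λ | ∃ x ∈ X, dist x y ≤ r}; and (ii) the inverse automorphism α⁻¹ also maps 𝒜_{{x}} into 𝒜_{Metric.closedBall x r} for every x ∈ Λ. -/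
open Matrix

noncomputable def supportedOn {Λ : Type*} [Fintype Λ] (d : ℕ) (S : Set Λ) :
    Set (Matrix (Λ → Fin d) (Λ → Fin d) ℂ) :=
  { A | ∃ M : Matrix ({x : Λ // x ∈ S} → Fin d) ({x : Λ // x ∈ S} → Fin d) ℂ,
      A =
        letI : DecidablePred (· ∈ S) := Classical.decPred _
        letI : DecidableEq ({x : Λ // ¬ x ∈ S} → Fin d) := Classical.decEq _
        Matrix.reindex
          (Equiv.piEquivPiSubtypeProd (· ∈ S) fun _ => Fin d).symm
          (Equiv.piEquivPiSubtypeProd (· ∈ S) fun _ => Fin d).symm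
          (Matrix.kroneckerMap (· * ·) M
            (1 : Matrix ({x : Λ // ¬ x ∈ S} → Fin d) ({x : Λ // ¬ x ∈ S} → Fin d) ℂ)) }

namespace Stmt10Aux

open Function
open scoped Classical

variable {Λ : Type*} [Fintype Λ] {d : ℕ}

theorem entry_eq {S : Set Λ} [DecidablePred (· ∈ S)]
    [DecidableEq ({x : Λ // ¬ x ∈ S} → Fin d)]
    (M : Matrix ({x : Λ // x ∈ S} → Fin d) ({x : Λ // x ∈ S} → Fin d) ℂ)
    (f g : Λ → Fin d) :
    ((∀ x ∉ S, f x = g x) →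
      (Matrix.reindex
       (Equiv.piEquivPiSubtypeProd (· ∈ S) fun _ => Fin d).symm
       (Equiv.piEquivPiSubtypeProd (· ∈ S) fun _ => Fin d).symm
       (Matrix.kroneckerMap (· * ·) M
         (1 : Matrix ({x : Λ // ¬ x ∈ S} → Fin d) ({x : Λ // ¬ x ∈ S} → Fin d) ℂ))) f g
      = M (fun x => f x) (fun x => g x)) ∧
    ((∃ x ∉ S, f x ≠ g x) →
      (Matrix.reindex
       (Equiv.piEquivPiSubtypeProd (· ∈ S) fun _ => Fin d).symm
       (Equiv.piEquivPiSubtypeProd (· ∈ S) fun _ => Fin d).symm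
       (Matrix.kroneckerMap (· * ·) M
         (1 : Matrix ({x : Λ // ¬ x ∈ S} → Fin d) ({x : Λ // ¬ x ∈ S} → Fin d) ℂ))) f g
      = 0) := by
  constructor
  · intro hfg
    have hc : (fun x : {x : Λ // ¬ x ∈ S} => f x) = (fun x : {x : Λ // ¬ x ∈ S} => g x) :=
      funext fun x => hfg x x.2
    simp only [Matrix.reindex_apply, Equiv.symm_symm, Matrix.submatrix_apply,
      Equiv.piEquivPiSubtypeProd_apply, Matrix.kroneckerMap_apply]
    show M _ _ * (1 : Matrix _ _ ℂ) _ _ = _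
    rw [hc, Matrix.one_apply_eq, mul_one]
  · rintro ⟨x, hx, hne⟩
    have hc : (fun x : {x : Λ // ¬ x ∈ S} => f x) ≠ (fun x : {x : Λ // ¬ x ∈ S} => g x) :=
      fun h => hne (congrFun h ⟨x, hx⟩)
    simp only [Matrix.reindex_apply, Equiv.symm_symm, Matrix.submatrix_apply,
      Equiv.piEquivPiSubtypeProd_apply, Matrix.kroneckerMap_apply]
    show M _ _ * (1 : Matrix _ _ ℂ) _ _ = _
    rw [Matrix.one_apply_ne hc, mul_zero]

theorem mem_iff {S : Set Λ} {A : Matrix (Λ → Fin d) (Λ → Fin d) ℂ} :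
    A ∈ supportedOn d S ↔
      ∃ M : Matrix ({x : Λ // x ∈ S} → Fin d) ({x : Λ // x ∈ S} → Fin d) ℂ,
        ∀ f g : Λ → Fin d,
          ((∀ x ∉ S, f x = g x) → A f g = M (fun x => f x) (fun x => g x)) ∧
          ((∃ x ∉ S, f x ≠ g x) → A f g = 0) := by
  constructor
  · rintro ⟨M, rfl⟩
    exact ⟨M, fun f g => @entry_eq Λ _ d S (Classical.decPred _) (Classical.decEq _) M f g⟩
  · rintro ⟨M, h⟩
    refine ⟨M, ?_⟩
    ext f g
    by_cases hc : ∀ x ∉ S, f x = g x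
    · rw [(h f g).1 hc,
        (@entry_eq Λ _ d S (Classical.decPred _) (Classical.decEq _) M f g).1 hc]
    · push_neg at hc
      obtain ⟨x, hx, hne⟩ := hc
      rw [(h f g).2 ⟨x, hx, hne⟩,
        (@entry_eq Λ _ d S (Classical.decPred _) (Classical.decEq _) M f g).2 ⟨x, hx, hne⟩]


variable [DecidableEq Λ]

/-- Pointwise support predicate: `A` vanishes on pairs differing outside `S`,
and is invariant under simultaneous updates outside `S` (at agreeing points). -/
def Supp (S : Set Λ) (A : Matrix (Λ → Fin d) (Λ → Fin d) ℂ) : Prop :=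
  (∀ f g : Λ → Fin d, (∃ x ∉ S, f x ≠ g x) → A f g = 0) ∧
  (∀ (f g : Λ → Fin d) (y : Λ) (w : Fin d), y ∉ S → f y = g y →
      A (Function.update f y w) (Function.update g y w) = A f g)

theorem Supp.of_mem {S : Set Λ} {A : Matrix (Λ → Fin d) (Λ → Fin d) ℂ}
    (hA : A ∈ supportedOn d S) : Supp S A := by
  obtain ⟨M, h⟩ := mem_iff.mp hA
  constructor
  · intro f g hfg
    exact (h f g).2 hfg
  · intro f g y w hy hfy
    by_cases hc : ∀ x ∉ S, f x = g x
    · have hc' : ∀ x ∉ S, Function.update f y w x = Function.update g y w x := by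
        intro x hx
        by_cases hxy : x = y
        · subst hxy; simp
        · rw [Function.update_of_ne hxy, Function.update_of_ne hxy]
          exact hc x hx
      rw [(h (Function.update f y w) (Function.update g y w)).1 hc', (h f g).1 hc]
      congr 1 <;> funext x <;>
        exact Function.update_of_ne (fun hxy : (x : Λ) = y => hy (hxy ▸ x.2)) _ _
    · push_neg at hc
      obtain ⟨x, hx, hne⟩ := hc
      have hxy : x ≠ y := fun h' => hne (h' ▸ hfy)
      have hne' : Function.update f y w x ≠ Function.update g y w x := by
        rw [Function.update_of_ne hxy, Function.update_of_ne hxy]; exact hne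
      rw [(h (Function.update f y w) (Function.update g y w)).2 ⟨x, hx, hne'⟩,
        (h f g).2 ⟨x, hx, hne⟩]

theorem Supp.mono {S T : Set Λ} (hST : S ⊆ T) {A : Matrix (Λ → Fin d) (Λ → Fin d) ℂ}
    (h : Supp S A) : Supp T A :=
  ⟨fun f g ⟨x, hx, hne⟩ => h.1 f g ⟨x, fun hs => hx (hST hs), hne⟩,
   fun f g y w hy hfy => h.2 f g y w (fun hs => hy (hST hs)) hfy⟩

theorem Supp.override {S : Set Λ} {A : Matrix (Λ → Fin d) (Λ → Fin d) ℂ}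
    (hA : Supp S A) (f g h : Λ → Fin d) (hfg : ∀ x ∉ S, f x = g x) :
    A f g = A (fun x => if x ∈ S then f x else h x) (fun x => if x ∈ S then g x else h x) := by
  have key : ∀ T : Finset Λ, (∀ x ∈ T, x ∉ S) →
      A (fun x => if x ∈ T then h x else f x) (fun x => if x ∈ T then h x else g x)
        = A f g := by
    intro T
    induction T using Finset.induction_on with
    | empty => intro _; simp
    | @insert y T hyT ih =>
      intro hT
      have h1 : (fun x => if x ∈ insert y T then h x else f x)
          = Function.update (fun x => if x ∈ T then h x else f x) y (h y) := by
        funext x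
        by_cases hxy : x = y
        · subst hxy; simp
        · rw [Function.update_of_ne hxy]
          simp [Finset.mem_insert, hxy]
      have h2 : (fun x => if x ∈ insert y T then h x else g x)
          = Function.update (fun x => if x ∈ T then h x else g x) y (h y) := by
        funext x
        by_cases hxy : x = y
        · subst hxy; simp
        · rw [Function.update_of_ne hxy]
          simp [Finset.mem_insert, hxy]
      have hyS : y ∉ S := hT y (Finset.mem_insert_self y T)
      have hval : (fun x => if x ∈ T then h x else f x) y
          = (fun x => if x ∈ T then h x else g x) y := by
        simp only [hyT, if_neg]
        exact hfg y hyS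
      rw [h1, h2,
        hA.2 (fun x => if x ∈ T then h x else f x) (fun x => if x ∈ T then h x else g x)
          y (h y) hyS hval]
      exact ih fun x hx => hT x (Finset.mem_insert_of_mem hx)
  have e1 : (fun x => if x ∈ S then f x else h x)
      = fun x => if x ∈ Finset.univ.filter (fun x : Λ => x ∉ S) then h x else f x := by
    funext x
    by_cases hx : x ∈ S <;> simp [hx]
  have e2 : (fun x => if x ∈ S then g x else h x)
      = fun x => if x ∈ Finset.univ.filter (fun x : Λ => x ∉ S) then h x else g x := by
    funext x
    by_cases hx : x ∈ S <;> simp [hx]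
  rw [e1, e2, key _ (fun x hx => (Finset.mem_filter.mp hx).2)]


theorem Supp.mem {S : Set Λ} {A : Matrix (Λ → Fin d) (Λ → Fin d) ℂ}
    (hA : Supp S A) : A ∈ supportedOn d S := by
  rcases isEmpty_or_nonempty (Λ → Fin d) with hE | hN
  · refine ⟨0, ?_⟩
    ext f g
    exact isEmptyElim f
  · obtain ⟨f₀⟩ := hN
    rw [mem_iff]
    refine ⟨Matrix.of fun a b =>
      A (fun x => if hx : x ∈ S then a ⟨x, hx⟩ else f₀ x)
        (fun x => if hx : x ∈ S then b ⟨x, hx⟩ else f₀ x), fun f g => ?_⟩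
    refine ⟨fun hc => ?_, hA.1 f g⟩
    calc A f g
        = A (fun x => if x ∈ S then f x else f₀ x)
            (fun x => if x ∈ S then g x else f₀ x) := hA.override f g f₀ hc
      _ = _ := by
          rw [Matrix.of_apply]
          congr 1 <;> funext x <;> by_cases hx : x ∈ S <;> simp [hx]

theorem Supp.commute {S : Set Λ} {A B : Matrix (Λ → Fin d) (Λ → Fin d) ℂ}
    (hA : Supp S A) (hB : Supp Sᶜ B) : A * B = B * A := by
  ext f g
  rw [Matrix.mul_apply, Matrix.mul_apply]
  have hm1 : ∑ h : Λ → Fin d, A f h * B h g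
      = A f (fun x => if x ∈ S then g x else f x)
        * B (fun x => if x ∈ S then g x else f x) g := by
    apply Finset.sum_eq_single
    · intro h _ hne
      obtain ⟨x, hx⟩ := Function.ne_iff.mp hne
      by_cases hxS : x ∈ S
      · have hxg : h x ≠ g x := by simpa [hxS] using hx
        rw [hB.1 h g ⟨x, by simp [hxS], hxg⟩, mul_zero]
      · have hxf : f x ≠ h x := fun e => (by simpa [hxS] using hx : h x ≠ f x) e.symm
        rw [hA.1 f h ⟨x, hxS, hxf⟩, zero_mul]
    · intro hmem; exact absurd (Finset.mem_univ _) hmem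
  have hm2 : ∑ h : Λ → Fin d, B f h * A h g
      = B f (fun x => if x ∈ S then f x else g x)
        * A (fun x => if x ∈ S then f x else g x) g := by
    apply Finset.sum_eq_single
    · intro h _ hne
      obtain ⟨x, hx⟩ := Function.ne_iff.mp hne
      by_cases hxS : x ∈ S
      · have hxf : f x ≠ h x := fun e => (by simpa [hxS] using hx : h x ≠ f x) e.symm
        rw [hB.1 f h ⟨x, by simp [hxS], hxf⟩, zero_mul]
      · have hxg : h x ≠ g x := by simpa [hxS] using hx
        rw [hA.1 h g ⟨x, hxS, hxg⟩, mul_zero]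
    · intro hmem; exact absurd (Finset.mem_univ _) hmem
  rw [hm1, hm2]
  have eA : A f (fun x => if x ∈ S then g x else f x)
      = A (fun x => if x ∈ S then f x else g x) g := by
    have o1 := hA.override f (fun x => if x ∈ S then g x else f x) f
      (fun x hx => by simp [hx])
    have o2 := hA.override (fun x => if x ∈ S then f x else g x) g f
      (fun x hx => by simp [hx])
    rw [o1, o2]
    congr 1 <;> funext x <;> by_cases hx : x ∈ S <;> simp [hx]
  have eB : B (fun x => if x ∈ S then g x else f x) g
      = B f (fun x => if x ∈ S then f x else g x) := by
    have o1 := hB.override (fun x => if x ∈ S then g x else f x) g f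
      (fun x hx => by
        have hx' : x ∈ S := by simpa using hx
        simp [hx'])
    have o2 := hB.override f (fun x => if x ∈ S then f x else g x) f
      (fun x hx => by
        have hx' : x ∈ S := by simpa using hx
        simp [hx'])
    rw [o1, o2]
    congr 1 <;> funext x <;> by_cases hx : x ∈ S <;> simp [hx]
  rw [eA, eB, mul_comm]


theorem supp_of_commute {S : Set Λ} {A : Matrix (Λ → Fin d) (Λ → Fin d) ℂ}
    (hc : ∀ y ∉ S, ∀ B : Matrix (Λ → Fin d) (Λ → Fin d) ℂ,
      Supp ({y} : Set Λ) B → A * B = B * A) :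
    Supp S A := by
  have key : ∀ y ∉ S, ∀ (f g : Λ → Fin d) (k l : Fin d),
      A f (Function.update g y k) * (if g y = l then (1:ℂ) else 0)
        = (if f y = k then (1:ℂ) else 0) * A (Function.update f y l) g := by
    intro y hy f g k l
    set B : Matrix (Λ → Fin d) (Λ → Fin d) ℂ := Matrix.of fun p q =>
      (if p y = k then (1:ℂ) else 0) * (if q y = l then (1:ℂ) else 0) *
        (if ∀ x ≠ y, p x = q x then (1:ℂ) else 0) with hBdef
    have hBsupp : Supp ({y} : Set Λ) B := by
      constructor
      · rintro p q ⟨x, hx, hne⟩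
        have hxy : x ≠ y := by simpa using hx
        have hnall : ¬ ∀ x ≠ y, p x = q x := fun hall => hne (hall x hxy)
        simp [hBdef, hnall]
      · intro p q z w hz hpq
        have hzy : z ≠ y := by simpa using hz
        simp only [hBdef, Matrix.of_apply]
        rw [Function.update_of_ne (Ne.symm hzy), Function.update_of_ne (Ne.symm hzy)]
        congr 1
        have hiff : (∀ x ≠ y, Function.update p z w x = Function.update q z w x)
            ↔ ∀ x ≠ y, p x = q x := by
          constructor
          · intro hall x hxy
            by_cases hxz : x = z
            · subst hxz; exact hpq
            · have := hall x hxy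
              rwa [Function.update_of_ne hxz, Function.update_of_ne hxz] at this
          · intro hall x hxy
            by_cases hxz : x = z
            · subst hxz; simp
            · rw [Function.update_of_ne hxz, Function.update_of_ne hxz]
              exact hall x hxy
        by_cases hall : ∀ x ≠ y, p x = q x
        · rw [if_pos hall, if_pos (hiff.mpr hall)]
        · rw [if_neg hall, if_neg (fun h' => hall (hiff.mp h'))]
    have hAB := hc y hy B hBsupp
    have h1 : (A * B) f g
        = A f (Function.update g y k) * (if g y = l then (1:ℂ) else 0) := by
      rw [Matrix.mul_apply]
      rw [Finset.sum_eq_single (Function.update g y k)]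
      · have e1 : B (Function.update g y k) g = (if g y = l then (1:ℂ) else 0) := by
          have hall : ∀ x ≠ y, Function.update g y k x = g x := fun x hxy =>
            Function.update_of_ne hxy _ _
          simp only [hBdef, Matrix.of_apply]
          rw [if_pos (Function.update_self y k g), if_pos hall, one_mul, mul_one]
        rw [e1]
      · intro h' _ hne
        by_cases h1 : h' y = k
        · have hnall : ¬ ∀ x ≠ y, h' x = g x := by
            intro hall
            apply hne
            funext x
            by_cases hxy : x = y
            · subst hxy; rw [Function.update_self]; exact h1
            · rw [Function.update_of_ne hxy]; exact hall x hxy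
          simp [hBdef, hnall]
        · simp [hBdef, h1]
      · intro hmem; exact absurd (Finset.mem_univ _) hmem
    have h2 : (B * A) f g
        = (if f y = k then (1:ℂ) else 0) * A (Function.update f y l) g := by
      rw [Matrix.mul_apply]
      rw [Finset.sum_eq_single (Function.update f y l)]
      · have e1 : B f (Function.update f y l) = (if f y = k then (1:ℂ) else 0) := by
          have hall : ∀ x ≠ y, f x = Function.update f y l x := fun x hxy =>
            (Function.update_of_ne hxy _ _).symm
          simp only [hBdef, Matrix.of_apply]
          rw [if_pos (Function.update_self y l f), if_pos hall, mul_one, mul_one]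
        rw [e1]
      · intro h' _ hne
        by_cases h1 : h' y = l
        · have hnall : ¬ ∀ x ≠ y, f x = h' x := by
            intro hall
            apply hne
            funext x
            by_cases hxy : x = y
            · subst hxy; rw [Function.update_self]; exact h1
            · rw [Function.update_of_ne hxy]; exact (hall x hxy).symm
          simp [hBdef, hnall]
        · simp [hBdef, h1]
      · intro hmem; exact absurd (Finset.mem_univ _) hmem
    rw [← h1, ← h2, hAB]
  constructor
  · rintro f g ⟨x, hx, hne⟩
    have hk := key x hx f g (f x) (f x)
    rw [if_pos rfl, one_mul, if_neg (fun e : g x = f x => hne e.symm), mul_zero,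
      Function.update_eq_self] at hk
    exact hk.symm
  · intro f g y w hy hfy
    have hk := key y hy (Function.update f y w) g w (g y)
    rw [if_pos rfl, mul_one, if_pos (Function.update_self y w f), one_mul,
      Function.update_idem] at hk
    rw [hk, ← hfy, Function.update_eq_self]

end Stmt10Aux

/-- If an algebra automorphism `α` of the observable algebra of a
finite lattice `Λ` maps every single-site algebra `𝒜_{x}` into `𝒜_{B_r(x)}`, then
(i) it maps `𝒜_X` into `𝒜_{B_r(X)}` for every `X ⊆ Λ`, and (ii) its inverse also
maps each `𝒜_{x}` into `𝒜_{B_r(x)}`. -/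
theorem stmt10 {Λ : Type*} [MetricSpace Λ] [Fintype Λ] [DecidableEq Λ] (d : ℕ)
    (α : Matrix (Λ → Fin d) (Λ → Fin d) ℂ ≃ₐ[ℂ] Matrix (Λ → Fin d) (Λ → Fin d) ℂ)
    (r : ℝ) (hr : 0 ≤ r)
    (hα : ∀ x : Λ, ∀ A ∈ supportedOn d ({x} : Set Λ),
      α A ∈ supportedOn d (Metric.closedBall x r)) :
    (∀ X : Set Λ, ∀ A ∈ supportedOn d X,
      α A ∈ supportedOn d {y : Λ | ∃ x ∈ X, dist x y ≤ r}) ∧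
    (∀ x : Λ, ∀ A ∈ supportedOn d ({x} : Set Λ),
      α.symm A ∈ supportedOn d (Metric.closedBall x r)) := by
  have hii : ∀ x : Λ, ∀ A ∈ supportedOn d ({x} : Set Λ),
      α.symm A ∈ supportedOn d (Metric.closedBall x r) := by
    intro x A hA
    apply Stmt10Aux.Supp.mem
    apply Stmt10Aux.supp_of_commute
    intro y hy B hB
    have hAx : Stmt10Aux.Supp ({x} : Set Λ) A := Stmt10Aux.Supp.of_mem hA
    have hαB : Stmt10Aux.Supp (Metric.closedBall y r) (α B) :=
      Stmt10Aux.Supp.of_mem (hα y B hB.mem)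
    have hdisj : Metric.closedBall y r ⊆ ({x} : Set Λ)ᶜ := by
      intro z hz hzx
      rw [Set.mem_singleton_iff] at hzx
      subst hzx
      rw [Metric.mem_closedBall] at hz
      exact hy (Metric.mem_closedBall.mpr (by rwa [dist_comm] at hz))
    have hcomm : A * α B = α B * A := hAx.commute (hαB.mono hdisj)
    have := congrArg α.symm hcomm
    simpa [_root_.map_mul] using this
  refine ⟨?_, hii⟩
  intro X A hA
  apply Stmt10Aux.Supp.mem
  apply Stmt10Aux.supp_of_commute
  intro y hy B hB
  have hA' : Stmt10Aux.Supp X A := Stmt10Aux.Supp.of_mem hA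
  have hB' : Stmt10Aux.Supp (Metric.closedBall y r) (α.symm B) :=
    Stmt10Aux.Supp.of_mem (hii y B hB.mem)
  have hsub : Metric.closedBall y r ⊆ Xᶜ := by
    intro z hz hzX
    exact hy ⟨z, hzX, Metric.mem_closedBall.mp hz⟩
  have hcomm : A * α.symm B = α.symm B * A := hA'.commute (hB'.mono hsub)
  have := congrArg α hcomm
  simpa [_root_.map_mul] using this
end

section
/- Let R be a ring, n ≥ 1, and equip ℝ^n (as Fin n → ℝ) with the sup metric. Let A assign to each x ∈ ℝ^n an R-module A x, locally finitely: for every bounded subset B ⊆ ℝ^n, the set {x ∈ B | A x ≠ ⊥} is finite. For m ∈ ℤ^n define A' m = ⨁_{x : ⌊x⌋ = m} A x, where ⌊x⌋ ∈ ℤ^n is the coordinatewise floor. Then: (i) for each m ∈ ℤ^n the set {x | ⌊x⌋ = m ∧ A x ≠ ⊥} is finite, so each A' m is a finite direct sum; (ii) the family A' is locally finite over ℤ^n; and (iii) the families of linear maps φ_{m,x} : A x →ₗ[R] A' m (the canonical inclusion of the summand A x when ⌊x⌋ = m, and 0 otherwise) and ψ_{x,m} : A' m →ₗ[R] A x (the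 canonical projection when ⌊x⌋ = m, and 0 otherwise) have propagation ≤ 1 in the sup metric (they vanish when the sup-distance between x and m exceeds 1) and are mutually inverse: Σ_m ψ_{x,m} ∘ φ_{m,x} = id_{A x} for every x, and Σ_x φ_{m,x} ∘ ψ_{x,m} = id_{A' m} for every m. -/
/-- The canonical inclusion `A x →ₗ[R] ⨁_{⌊x'⌋ = m} A x'` when `⌊x⌋ = m`
(coordinatewise floor), and `0` otherwise. -/
noncomputable def phiMap {R : Type*} [Semiring R] {n : ℕ}
    (A : (Fin n → ℝ) → Type*) [∀ x, AddCommMonoid (A x)] [∀ x, Module R (A x)]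
    (m : Fin n → ℤ) (x : Fin n → ℝ) :
    A x →ₗ[R] DirectSum {x' : Fin n → ℝ // (fun i => ⌊x' i⌋) = m} (fun x' => A x'.1) :=
  letI : DecidableEq {x' : Fin n → ℝ // (fun i => ⌊x' i⌋) = m} := Classical.decEq _
  if h : (fun i => ⌊x i⌋) = m then
    DirectSum.lof R {x' : Fin n → ℝ // (fun i => ⌊x' i⌋) = m} (fun x' => A x'.1) ⟨x, h⟩
  else 0

/-- The canonical projection `⨁_{⌊x'⌋ = m} A x' →ₗ[R] A x` when `⌊x⌋ = m`
(coordinatewise floor), and `0` otherwise. -/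
noncomputable def psiMap {R : Type*} [Semiring R] {n : ℕ}
    (A : (Fin n → ℝ) → Type*) [∀ x, AddCommMonoid (A x)] [∀ x, Module R (A x)]
    (m : Fin n → ℤ) (x : Fin n → ℝ) :
    DirectSum {x' : Fin n → ℝ // (fun i => ⌊x' i⌋) = m} (fun x' => A x'.1) →ₗ[R] A x :=
  if h : (fun i => ⌊x i⌋) = m then
    DirectSum.component R {x' : Fin n → ℝ // (fun i => ⌊x' i⌋) = m} (fun x' => A x'.1) ⟨x, h⟩
  else 0

open Bornology

lemma phiMap_neg {R : Type*} [Semiring R] {n : ℕ}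
    (A : (Fin n → ℝ) → Type*) [∀ x, AddCommMonoid (A x)] [∀ x, Module R (A x)]
    {m : Fin n → ℤ} {x : Fin n → ℝ} (h : ¬((fun i => ⌊x i⌋) = m)) :
    phiMap (R := R) A m x = 0 := by
  unfold phiMap; rw [dif_neg h]

lemma psiMap_neg {R : Type*} [Semiring R] {n : ℕ}
    (A : (Fin n → ℝ) → Type*) [∀ x, AddCommMonoid (A x)] [∀ x, Module R (A x)]
    {m : Fin n → ℤ} {x : Fin n → ℝ} (h : ¬((fun i => ⌊x i⌋) = m)) :
    psiMap (R := R) A m x = 0 := by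
  unfold psiMap; rw [dif_neg h]

lemma dist_le_one_of_floor {n : ℕ} {x : Fin n → ℝ} {m : Fin n → ℤ}
    (h : (fun i => ⌊x i⌋) = m) : dist x (fun i => (m i : ℝ)) ≤ 1 := by
  rw [dist_pi_le_iff zero_le_one]
  intro i
  have hm : (↑(m i) : ℝ) ≤ x i ∧ x i < (m i : ℝ) + 1 := Int.floor_eq_iff.mp (congrFun h i)
  rw [Real.dist_eq, abs_le]
  constructor <;> linarith [hm.1, hm.2]

lemma exists_nontrivial_of_directSum {ι : Type*} (β : ι → Type*) [∀ i, AddCommMonoid (β i)]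
    (h : Nontrivial (DirectSum ι β)) : ∃ i, Nontrivial (β i) := by
  obtain ⟨a, b, hab⟩ := h
  by_contra h'
  push_neg at h'
  exact hab (DFinsupp.ext fun i => Subsingleton.elim _ _)

/-- Coarse-graining a locally finite family of modules over `ℝⁿ`
(with the sup metric) to `ℤⁿ` via the coordinatewise floor: each regrouped module
`A' m = ⨁_{⌊x⌋ = m} A x` is a finite direct sum, the regrouped family is locally
finite over `ℤⁿ`, and the canonical inclusions/projections have propagation `≤ 1`
and are mutually inverse. -/
theorem stmt12 {R : Type*} [Ring R] {n : ℕ} (hn : 1 ≤ n)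
    (A : (Fin n → ℝ) → Type*) [∀ x, AddCommGroup (A x)] [∀ x, Module R (A x)]
    (hA : ∀ B : Set (Fin n → ℝ), IsBounded B → {x | x ∈ B ∧ Nontrivial (A x)}.Finite) :
    (∀ m : Fin n → ℤ, {x : Fin n → ℝ | (fun i => ⌊x i⌋) = m ∧ Nontrivial (A x)}.Finite) ∧
    (∀ B : Set (Fin n → ℤ), IsBounded B →
      {m | m ∈ B ∧
        Nontrivial (DirectSum {x' : Fin n → ℝ // (fun i => ⌊x' i⌋) = m}
          (fun x' => A x'.1))}.Finite) ∧
    (∀ (m : Fin n → ℤ) (x : Fin n → ℝ), 1 < dist x (fun i => (m i : ℝ)) →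
      phiMap (R := R) A m x = 0 ∧ psiMap (R := R) A m x = 0) ∧
    (∀ x : Fin n → ℝ,
      (∑ᶠ m : Fin n → ℤ, (psiMap (R := R) A m x) ∘ₗ (phiMap (R := R) A m x)) = LinearMap.id) ∧
    (∀ m : Fin n → ℤ,
      (∑ᶠ x : Fin n → ℝ, (phiMap (R := R) A m x) ∘ₗ (psiMap (R := R) A m x)) = LinearMap.id) := by
  classical
  have part1 : ∀ m : Fin n → ℤ,
      {x : Fin n → ℝ | (fun i => ⌊x i⌋) = m ∧ Nontrivial (A x)}.Finite := by
    intro m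
    refine (hA (Metric.closedBall (fun i => (m i : ℝ)) 1) Metric.isBounded_closedBall).subset ?_
    rintro x ⟨hx, hxn⟩
    exact ⟨Metric.mem_closedBall.2 (dist_le_one_of_floor hx), hxn⟩
  refine ⟨part1, ?_, ?_, ?_, ?_⟩
  · -- part 2
    intro B hB
    obtain ⟨r, hr⟩ := (Metric.isBounded_iff_subset_closedBall (fun _ => (0 : ℤ))).1 hB
    set S := {m | m ∈ B ∧
        Nontrivial (DirectSum {x' : Fin n → ℝ // (fun i => ⌊x' i⌋) = m}
          (fun x' => A x'.1))} with hSdef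
    have hmem : ∀ m ∈ B, ∀ x : Fin n → ℝ, (fun i => ⌊x i⌋) = m →
        x ∈ Metric.closedBall (fun _ => (0 : ℝ)) (r + 1) := by
      intro m hm x hx
      have hdm : dist m (fun _ => (0 : ℤ)) ≤ r := hr hm
      have hr0 : 0 ≤ r := le_trans dist_nonneg hdm
      rw [Metric.mem_closedBall, dist_pi_le_iff (by linarith)]
      intro i
      have h1 : dist (x i) ((m i : ℝ)) ≤ 1 :=
        le_trans (by simpa using dist_le_pi_dist x (fun i => ((m i : ℝ))) i)
          (dist_le_one_of_floor hx)
      have h2 : dist ((m i : ℝ)) (0 : ℝ) ≤ r := by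
        rw [show ((0:ℝ) = ((0:ℤ):ℝ)) by norm_num, Int.dist_cast_real]
        exact le_trans (by simpa using dist_le_pi_dist m (fun _ => (0 : ℤ)) i) hdm
      calc dist (x i) (0 : ℝ) ≤ dist (x i) ((m i : ℝ)) + dist ((m i : ℝ)) 0 := dist_triangle _ _ _
      _ ≤ 1 + r := add_le_add h1 h2
      _ = r + 1 := by ring
    have hex : ∀ m ∈ S, ∃ x : Fin n → ℝ, (fun i => ⌊x i⌋) = m ∧ Nontrivial (A x) := by
      rintro m ⟨hmB, hmN⟩
      obtain ⟨i, hi⟩ := exists_nontrivial_of_directSum _ hmN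
      exact ⟨i.1, i.2, hi⟩
    set g : (Fin n → ℤ) → (Fin n → ℝ) := fun m =>
      if h : ∃ x : Fin n → ℝ, (fun i => ⌊x i⌋) = m ∧ Nontrivial (A x) then h.choose
      else fun _ => 0 with hgdef
    have hg : ∀ m ∈ S, (fun i => ⌊(g m) i⌋) = m ∧ Nontrivial (A (g m)) := by
      intro m hm
      have hexm := hex m hm
      simp only [hgdef, dif_pos hexm]
      exact hexm.choose_spec
    have hfin := hA (Metric.closedBall (fun _ => (0 : ℝ)) (r + 1)) Metric.isBounded_closedBall
    refine Set.Finite.of_finite_image (f := g) (hfin.subset ?_) ?_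
    · rintro _ ⟨m, hm, rfl⟩
      exact ⟨hmem m hm.1 (g m) (hg m hm).1, (hg m hm).2⟩
    · intro m1 h1 m2 h2 he
      rw [← (hg m1 h1).1, ← (hg m2 h2).1, he]
  · -- part 3
    intro m x hd
    have hne : ¬ ((fun i => ⌊x i⌋) = m) :=
      fun h => absurd (dist_le_one_of_floor h) (not_le.2 hd)
    exact ⟨phiMap_neg A hne, psiMap_neg A hne⟩
  · -- part 4
    intro x
    have hz : ∀ m' : Fin n → ℤ, m' ≠ (fun i => ⌊x i⌋) →
        (psiMap (R := R) A m' x) ∘ₗ (phiMap (R := R) A m' x) = 0 := by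
      intro m' hm'
      rw [phiMap_neg A (fun h => hm' h.symm), LinearMap.comp_zero]
    rw [finsum_eq_single _ _ hz]
    apply LinearMap.ext; intro a
    simp only [LinearMap.comp_apply, LinearMap.id_apply]
    unfold phiMap psiMap
    rw [dif_pos rfl, dif_pos rfl, DirectSum.component.lof_self]
  · -- part 5
    intro m
    have hS := part1 m
    have hsupp : Function.support
        (fun x => (phiMap (R := R) A m x) ∘ₗ (psiMap (R := R) A m x)) ⊆ ↑hS.toFinset := by
      intro x hx
      simp only [Set.Finite.coe_toFinset, Set.mem_setOf_eq]
      by_contra hc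
      apply hx
      show phiMap (R := R) A m x ∘ₗ psiMap (R := R) A m x = 0
      by_cases h : (fun i => ⌊x i⌋) = m
      · have hsub : Subsingleton (A x) := by
          rcases not_and_or.1 hc with h' | h'
          · exact absurd h h'
          · exact not_nontrivial_iff_subsingleton.1 h'
        apply LinearMap.ext; intro a
        have h0 : psiMap (R := R) A m x a = 0 := Subsingleton.elim _ _
        simp only [LinearMap.comp_apply, LinearMap.zero_apply, h0, map_zero]
      · rw [psiMap_neg A h, LinearMap.comp_zero]
    rw [finsum_eq_sum_of_support_subset _ hsupp]
    refine @DirectSum.linearMap_ext R _ _ _ _ _ (Classical.decEq _) _ _ _ _ _ (fun i => ?_)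
    apply LinearMap.ext; intro b
    simp only [LinearMap.comp_apply, LinearMap.id_apply, LinearMap.sum_apply]
    by_cases hib : i.1 ∈ hS.toFinset
    · rw [Finset.sum_eq_single_of_mem i.1 hib ?side]
      case side =>
        intro x hx hne
        have hfx : (fun j => ⌊x j⌋) = m := (hS.mem_toFinset.1 hx).1
        unfold phiMap psiMap
        rw [dif_pos hfx, dif_pos hfx, DirectSum.component.of]
        rw [dif_neg (fun hh : i = ⟨x, hfx⟩ => hne (congrArg Subtype.val hh).symm), map_zero]
      · unfold phiMap psiMap
        rw [dif_pos i.2, dif_pos i.2]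
        rw [DirectSum.component.lof_self]
    · have hsub : Subsingleton (A i.1) := by
        have := hS.mem_toFinset.not.1 hib
        rw [Set.mem_setOf_eq, not_and_or] at this
        rcases this with h' | h'
        · exact absurd i.2 h'
        · exact not_nontrivial_iff_subsingleton.1 h'
      have hb : b = 0 := Subsingleton.elim _ _
      rw [hb]
      simp only [map_zero, Finset.sum_const_zero]
end
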